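/- arXiv:1008.4633 — 3 statements merged into one kernel-verified Lean document; each statement's English description precedes it below -/
import Mathlib

section
/- In (ZMod 10)[X], the polynomial 2X + 1 (corresponding to the carryless number 21) is irreducible. -/
/-!
By the Chinese remainder theorem `ZMod 10 ≃ ZMod 2 × ZMod 5`, and a polynomial over a product
ring is a unit as soon as both of its components are (unit constant term, nilpotent higher
coefficients). Modulo 2 the polynomial `2X + 1` becomes `1`, so both factors of any factorization
are units there; modulo 5 it is linear, hence irreducible, so one factor is a unit there too.
-/

open Polynomial

theorem Prod.isNilpotent_iff {S T : Type*} [Semiring S] [Semiring T] {x : S × T} :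
    IsNilpotent x ↔ IsNilpotent x.1 ∧ IsNilpotent x.2 := by
  refine ⟨fun h => ⟨h.map (RingHom.fst S T), h.map (RingHom.snd S T)⟩, ?_⟩
  rintro ⟨⟨m, hm⟩, ⟨n, hn⟩⟩
  exact ⟨m + n, Prod.ext (pow_eq_zero_of_le (m.le_add_right n) hm)
    (pow_eq_zero_of_le (n.le_add_left m) hn)⟩

namespace Polynomial

variable {R S T : Type*} [CommRing R] [CommRing S] [CommRing T]

theorem isUnit_of_isUnit_map_fst_of_isUnit_map_snd (e : R ≃+* S × T) {p : R[X]}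
    (h₁ : IsUnit (p.map ((RingHom.fst S T).comp e)))
    (h₂ : IsUnit (p.map ((RingHom.snd S T).comp e))) : IsUnit p := by
  rw [isUnit_iff_coeff_isUnit_isNilpotent] at h₁ h₂ ⊢
  simp only [coeff_map, RingHom.comp_apply, RingHom.coe_fst, RingHom.coe_snd, RingHom.coe_coe]
    at h₁ h₂
  refine ⟨?_, fun i hi => ?_⟩
  · rw [← isUnit_map_iff e, Prod.isUnit_iff]
    exact ⟨h₁.1, h₂.1⟩
  · rw [← IsNilpotent.map_iff e.injective, Prod.isNilpotent_iff]
    exact ⟨h₁.2 i hi, h₂.2 i hi⟩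

theorem irreducible_of_isUnit_map_fst_of_irreducible_map_snd (e : R ≃+* S × T) {p : R[X]}
    (h₁ : IsUnit (p.map ((RingHom.fst S T).comp e)))
    (h₂ : Irreducible (p.map ((RingHom.snd S T).comp e))) : Irreducible p := by
  refine ⟨fun hp => h₂.not_isUnit (hp.map (mapRingHom _)), fun a b hab => ?_⟩
  rw [hab, Polynomial.map_mul] at h₁ h₂
  rcases h₂.isUnit_or_isUnit rfl with ha | hb
  · exact .inl (isUnit_of_isUnit_map_fst_of_isUnit_map_snd e (isUnit_of_mul_isUnit_left h₁) ha)
  · exact .inr (isUnit_of_isUnit_map_fst_of_isUnit_map_snd e (isUnit_of_mul_isUnit_right h₁) hb)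

end Polynomial

theorem irreducible_21 :
    Irreducible ((2 : Polynomial (ZMod 10)) * X + 1) := by
  have : Fact (Nat.Prime 5) := ⟨by norm_num⟩
  have e : ZMod 10 ≃+* ZMod 2 × ZMod 5 := ZMod.chineseRemainder (by norm_num : Nat.Coprime 2 5)
  refine irreducible_of_isUnit_map_fst_of_irreducible_map_snd e ?_ ?_
  · simp [CharTwo.two_eq_zero]
  · simp only [Polynomial.map_add, Polynomial.map_mul, Polynomial.map_ofNat, Polynomial.map_X,
      Polynomial.map_one]
    refine irreducible_of_degree_eq_one ?_
    compute_degree!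
    decide +revert
end

section
/- For each k ≥ 2, the number of irreducible elements of (ZMod 10)[X] of degree k−1, counted up to multiplication by units, equals (1/(k−1)) · Σ_{d | k−1} μ((k−1)/d) · (2^d + 5^d). -/
/-!
Via `ZMod 10 ≃+* ZMod 2 × ZMod 5`, the ring `(ZMod 10)[X]` is `𝔽₂[X] × 𝔽₅[X]`, whose irreducible
elements are the pairs (irreducible, unit) and (unit, irreducible). Up to units these are the monic
irreducibles over `𝔽₂` and over `𝔽₅`, and the degree is preserved because the degree of a
polynomial over a product of rings is the larger of the degrees of its two components.

Over a finite field with `q` elements, `X ^ q ^ n - X` is separable and its monic irreducible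
factors are exactly the monic irreducibles of degree dividing `n`; comparing degrees gives
`∑_{d ∣ n} d N(d) = q ^ n`, and Möbius inversion gives the count `N(n)`.
-/

open Polynomial UniqueFactorizationMonoid
open scoped Finset

namespace Prod

variable {M N : Type*} [CommMonoid M] [CommMonoid N]

theorem irreducible_iff_of_isUnit_fst {x : M × N} (hu : IsUnit x.1) :
    Irreducible x ↔ Irreducible x.2 := by
  constructor
  · intro hx
    refine ⟨fun h => hx.not_isUnit (isUnit_iff.mpr ⟨hu, h⟩), fun b c hbc => ?_⟩
    have hx' : x = (x.1, b) * (1, c) := Prod.ext (mul_one _).symm hbc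
    exact (hx.isUnit_or_isUnit hx').imp (isUnit_iff.mp · |>.2) (isUnit_iff.mp · |>.2)
  · intro hy
    refine ⟨fun h => hy.not_isUnit (isUnit_iff.mp h).2, fun b c hbc => ?_⟩
    have hbc₁ : IsUnit (b.1 * c.1) := by rw [← fst_mul, ← hbc]; exact hu
    rcases hy.isUnit_or_isUnit (congr_arg Prod.snd hbc) with h | h
    · exact Or.inl (isUnit_iff.mpr ⟨isUnit_of_mul_isUnit_left hbc₁, h⟩)
    · exact Or.inr (isUnit_iff.mpr ⟨isUnit_of_mul_isUnit_right hbc₁, h⟩)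

theorem irreducible_iff_of_isUnit_snd {x : M × N} (hu : IsUnit x.2) :
    Irreducible x ↔ Irreducible x.1 := by
  rw [← MulEquiv.irreducible_iff (MulEquiv.prodComm : M × N ≃* N × M)]
  exact irreducible_iff_of_isUnit_fst hu

theorem irreducible_iff {x : M × N} :
    Irreducible x ↔ Irreducible x.1 ∧ IsUnit x.2 ∨ IsUnit x.1 ∧ Irreducible x.2 := by
  refine ⟨fun hx => ?_, ?_⟩
  · rcases hx.isUnit_or_isUnit (show x = (x.1, 1) * (1, x.2) by ext <;> simp) with h | h
    · have hu := (isUnit_iff.mp h).1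
      exact Or.inr ⟨hu, (irreducible_iff_of_isUnit_fst (x := x) hu).mp hx⟩
    · have hu := (isUnit_iff.mp h).2
      exact Or.inl ⟨(irreducible_iff_of_isUnit_snd (x := x) hu).mp hx, hu⟩
  · rintro (⟨hi, hu⟩ | ⟨hu, hi⟩)
    · exact (irreducible_iff_of_isUnit_snd hu).mpr hi
    · exact (irreducible_iff_of_isUnit_fst hu).mpr hi

end Prod

namespace Polynomial

section ProdRing

variable {A R S : Type*} [CommRing A] [CommRing R] [CommRing S]

theorem map_fst_prod_map_snd_bijective :
    Function.Bijective fun f : (R × S)[X] =>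
      (f.map (RingHom.fst R S), f.map (RingHom.snd R S)) := by
  refine ⟨fun f g hfg => ?_, fun x => ?_⟩
  · ext n
    · simpa using congr_arg (coeff · n) (congr_arg Prod.fst hfg)
    · simpa using congr_arg (coeff · n) (congr_arg Prod.snd hfg)
  · refine ⟨⟨⟨Finsupp.zipWith Prod.mk rfl x.1.toFinsupp.coeff x.2.toFinsupp.coeff⟩⟩, ?_⟩
    ext n <;> rw [coeff_map, coeff_ofFinsupp] <;> rfl

noncomputable def prodRingEquiv : (R × S)[X] ≃+* R[X] × S[X] :=
  RingEquiv.ofBijective ((mapRingHom (RingHom.fst R S)).prod (mapRingHom (RingHom.snd R S)))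
    map_fst_prod_map_snd_bijective

theorem natDegree_eq_max_natDegree_map_fst_snd (f : (R × S)[X]) :
    f.natDegree = max (f.map (RingHom.fst R S)).natDegree (f.map (RingHom.snd R S)).natDegree := by
  refine le_antisymm (natDegree_le_iff_coeff_eq_zero.mpr fun j hj => Prod.ext ?_ ?_)
    (max_le natDegree_map_le natDegree_map_le)
  · change RingHom.fst R S (f.coeff j) = 0
    rw [← coeff_map]
    exact coeff_eq_zero_of_natDegree_lt (lt_of_le_of_lt (le_max_left _ _) hj)
  · change RingHom.snd R S (f.coeff j) = 0
    rw [← coeff_map]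
    exact coeff_eq_zero_of_natDegree_lt (lt_of_le_of_lt (le_max_right _ _) hj)

noncomputable def mapProdEquiv (e : A ≃+* R × S) : A[X] ≃+* R[X] × S[X] :=
  (mapEquiv e).trans prodRingEquiv

theorem natDegree_mapProdEquiv_symm (e : A ≃+* R × S) (x : R[X] × S[X]) :
    ((mapProdEquiv e).symm x).natDegree = max x.1.natDegree x.2.natDegree := by
  have hx : mapProdEquiv e ((mapProdEquiv e).symm x) = x := (mapProdEquiv e).apply_symm_apply x
  rw [← natDegree_map_eq_of_injective (f := (e : A →+* R × S)) e.injective,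
    natDegree_eq_max_natDegree_map_fst_snd]
  conv_rhs => rw [← hx]
  rfl

end ProdRing

abbrev MonicIrreducible (K : Type*) [Field K] (n : ℕ) :=
  {f : K[X] // f.Monic ∧ Irreducible f ∧ f.natDegree = n}

instance {k : Type*} [Field k] [Finite k] (d : ℕ) : Finite (MonicIrreducible k d) :=
  Finite.of_injective (fun f i => f.1.coeff i : MonicIrreducible k d → Fin (d + 1) → k)
    fun f g hfg => Subtype.ext <| (ext_iff_natDegree_le (n := d) f.2.2.2.le g.2.2.2.le).mpr
      fun i hi => congr_fun hfg ⟨i, Nat.lt_succ_of_le hi⟩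

section FiniteField

variable {k : Type*} [Field k] [Finite k]

theorem separable_X_pow_card_pow_sub_X {n : ℕ} (hn : n ≠ 0) :
    (X ^ Nat.card k ^ n - X : k[X]).Separable := by
  have := Fintype.ofFinite k
  have hq : ((Nat.card k : ℕ) : k) = 0 := by
    rw [Nat.card_eq_fintype_card]; exact Nat.cast_card_eq_zero k
  exact galois_poly_separable (ringChar k) _ (dvd_pow ((ringChar.spec k _).mp hq) hn)

theorem sum_divisors_mul_card_monicIrreducible {n : ℕ} (hn : n ≠ 0) :
    ∑ d ∈ n.divisors, d * Nat.card (MonicIrreducible k d) = Nat.card k ^ n := by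
  classical
  set P : k[X] := X ^ Nat.card k ^ n - X
  have hP0 : P ≠ 0 := FiniteField.X_pow_card_pow_sub_X_ne_zero k hn Finite.one_lt_card
  have hnodup : (normalizedFactors P).Nodup :=
    (squarefree_iff_nodup_normalizedFactors hP0).mp (separable_X_pow_card_pow_sub_X hn).squarefree
  set S := (normalizedFactors P).toFinset
  have hmem : ∀ f, f ∈ S ↔ f.Monic ∧ Irreducible f ∧ f.natDegree ∣ n := fun f => by
    rw [Multiset.mem_toFinset, Polynomial.mem_normalizedFactors_iff hP0]
    exact ⟨fun ⟨hi, hm, hd⟩ => ⟨hm, hi, hi.natDegree_dvd_iff_dvd_X_pow_card_pow_sub_X.mpr hd⟩,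
      fun ⟨hm, hi, hd⟩ => ⟨hi, hm, hi.natDegree_dvd_iff_dvd_X_pow_card_pow_sub_X.mp hd⟩⟩
  have hsum : ∑ f ∈ S, f.natDegree = Nat.card k ^ n := by
    have hmonic : P.Monic := monic_X_pow_sub (by
      rw [degree_X]; exact_mod_cast Nat.one_lt_pow hn Finite.one_lt_card)
    rw [Finset.sum_eq_multiset_sum, Multiset.toFinset_val, Multiset.dedup_eq_self.mpr hnodup,
      ← natDegree_multiset_prod_of_monic _
        fun f hf => ((hmem f).mp (Multiset.mem_toFinset.mpr hf)).1,
      prod_normalizedFactors_eq hP0, hmonic.normalize_eq_self,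
      FiniteField.X_pow_card_pow_sub_X_natDegree_eq k hn Finite.one_lt_card]
  have hcard : ∀ d ∈ n.divisors, Nat.card (MonicIrreducible k d) = #{f ∈ S | f.natDegree = d} :=
    fun d hd => by
      rw [← Nat.card_eq_finsetCard]
      refine Nat.card_congr (Equiv.subtypeEquivRight fun f => ?_)
      rw [Finset.mem_filter, hmem]
      exact ⟨fun ⟨hm, hi, hd'⟩ => ⟨⟨hm, hi, hd' ▸ Nat.dvd_of_mem_divisors hd⟩, hd'⟩,
        fun ⟨⟨hm, hi, _⟩, hd'⟩ => ⟨hm, hi, hd'⟩⟩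
  rw [← hsum, ← Finset.sum_fiberwise_of_maps_to (g := natDegree) (t := n.divisors)
    fun f hf => Nat.mem_divisors.mpr ⟨((hmem f).mp hf).2.2, hn⟩]
  refine Finset.sum_congr rfl fun d hd => ?_
  rw [hcard d hd, Finset.sum_congr rfl fun f hf => (Finset.mem_filter.mp hf).2, Finset.sum_const,
    smul_eq_mul, mul_comm]

theorem mul_card_monicIrreducible_eq_sum_moebius {n : ℕ} (hn : n ≠ 0) :
    (n : ℤ) * Nat.card (MonicIrreducible k n) =
      ∑ d ∈ n.divisors, ArithmeticFunction.moebius (n / d) * (Nat.card k : ℤ) ^ d := by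
  have h := (ArithmeticFunction.sum_eq_iff_sum_mul_moebius_eq
    (f := fun d => (d : ℤ) * Nat.card (MonicIrreducible k d))
    (g := fun m => (Nat.card k : ℤ) ^ m)).mp
    (fun m hm => mod_cast sum_divisors_mul_card_monicIrreducible hm.ne') n (Nat.pos_of_ne_zero hn)
  rw [← h, ← Nat.sum_divisorsAntidiagonal' fun a b => (ArithmeticFunction.moebius a : ℤ) * _ ^ b]
  simp only [Int.cast_id]

end FiniteField

namespace MonicIrreducible

variable {K L : Type*} [Field K] [Field L] {n : ℕ}

noncomputable def sumToProd : MonicIrreducible K n ⊕ MonicIrreducible L n → K[X] × L[X] :=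
  Sum.elim (fun g => (g.1, 1)) (fun h => (1, h.1))

theorem irreducible_sumToProd (s : MonicIrreducible K n ⊕ MonicIrreducible L n) :
    Irreducible (sumToProd s) := by
  rcases s with ⟨g, -, hg, -⟩ | ⟨h, -, hh, -⟩
  · exact Prod.irreducible_iff.mpr (Or.inl ⟨hg, isUnit_one⟩)
  · exact Prod.irreducible_iff.mpr (Or.inr ⟨isUnit_one, hh⟩)

theorem max_natDegree_sumToProd (s : MonicIrreducible K n ⊕ MonicIrreducible L n) :
    max (sumToProd s).1.natDegree (sumToProd s).2.natDegree = n := by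
  rcases s with ⟨g, -, -, rfl⟩ | ⟨h, -, -, rfl⟩ <;> simp [sumToProd]

theorem eq_of_associated_sumToProd {s t : MonicIrreducible K n ⊕ MonicIrreducible L n}
    (hst : Associated (sumToProd s) (sumToProd t)) : s = t := by
  obtain ⟨h₁, h₂⟩ := Prod.associated_iff.mp hst
  rcases s with ⟨g, hg⟩ | ⟨g, hg⟩ <;> rcases t with ⟨g', hg'⟩ | ⟨g', hg'⟩
  · obtain rfl := eq_of_monic_of_associated hg.1 hg'.1 h₁; rfl
  · exact absurd (associated_one_iff_isUnit.mp h₁) hg.2.1.not_isUnit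
  · exact absurd (associated_one_iff_isUnit.mp h₂) hg.2.1.not_isUnit
  · obtain rfl := eq_of_monic_of_associated hg.1 hg'.1 h₂; rfl

theorem exists_associated_sumToProd {x : K[X] × L[X]} (hx : Irreducible x)
    (hn : max x.1.natDegree x.2.natDegree = n) :
    ∃ s : MonicIrreducible K n ⊕ MonicIrreducible L n, Associated (sumToProd s) x := by
  classical
  obtain ⟨g, h⟩ := x
  subst hn
  rcases Prod.irreducible_iff.mp hx with ⟨hg, hh⟩ | ⟨hg, hh⟩
  · refine ⟨Sum.inl ⟨normalize g, monic_normalize hg.ne_zero,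
      (associated_normalize g).irreducible hg, ?_⟩,
      Prod.associated_iff.mpr ⟨normalize_associated g, (associated_one_iff_isUnit.mpr hh).symm⟩⟩
    rw [natDegree_eq_of_degree_eq degree_normalize, natDegree_eq_zero_of_isUnit hh,
      max_eq_left (Nat.zero_le _)]
  · refine ⟨Sum.inr ⟨normalize h, monic_normalize hh.ne_zero,
      (associated_normalize h).irreducible hh, ?_⟩,
      Prod.associated_iff.mpr ⟨(associated_one_iff_isUnit.mpr hg).symm, normalize_associated h⟩⟩
    rw [natDegree_eq_of_degree_eq degree_normalize, natDegree_eq_zero_of_isUnit hg,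
      max_eq_right (Nat.zero_le _)]

end MonicIrreducible

open MonicIrreducible in
noncomputable def irreducibleAssociatesEquiv {A K L : Type*} [CommRing A] [Field K] [Field L]
    (e : A ≃+* K × L) (n : ℕ) :
    {a : Associates A[X] // ∃ f : A[X], Irreducible f ∧ f.natDegree = n ∧ Associates.mk f = a} ≃
      MonicIrreducible K n ⊕ MonicIrreducible L n :=
  let Φ := mapProdEquiv e
  Equiv.symm <| Equiv.ofBijective
    (fun s => ⟨Associates.mk (Φ.symm (sumToProd s)), Φ.symm (sumToProd s),
      (MulEquiv.irreducible_iff Φ.symm).mpr (irreducible_sumToProd s),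
      (natDegree_mapProdEquiv_symm e _).trans (max_natDegree_sumToProd s), rfl⟩)
    ⟨fun s t hst => eq_of_associated_sumToProd <| by
        simpa using (Associates.mk_eq_mk_iff_associated.mp (congr_arg Subtype.val hst)).map Φ,
      by
        rintro ⟨_, f, hf, rfl, rfl⟩
        have hf' : Φ.symm (Φ f) = f := Φ.symm_apply_apply f
        obtain ⟨s, hs⟩ := exists_associated_sumToProd ((MulEquiv.irreducible_iff Φ).mpr hf)
          (by rw [← natDegree_mapProdEquiv_symm e, hf'])
        exact ⟨s, Subtype.ext (Associates.mk_eq_mk_iff_associated.mpr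
          (by simpa using hs.map Φ.symm))⟩⟩

end Polynomial

theorem count_carryless_primes (k : ℕ) (hk : 2 ≤ k) :
    ((k - 1 : ℕ) : ℤ) *
      Nat.card {a : Associates (Polynomial (ZMod 10)) //
        ∃ f : Polynomial (ZMod 10), Irreducible f ∧ f.natDegree = k - 1 ∧ Associates.mk f = a} =
    ∑ d ∈ (k - 1).divisors, (ArithmeticFunction.moebius ((k - 1) / d)) * ((2 : ℤ) ^ d + 5 ^ d) := by
  have : Fact (Nat.Prime 5) := ⟨by norm_num⟩
  have hk' : k - 1 ≠ 0 := by omega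
  rw [Nat.card_congr <|
      irreducibleAssociatesEquiv (ZMod.chineseRemainder (by norm_num : Nat.Coprime 2 5)) (k - 1),
    Nat.card_sum, Nat.cast_add, mul_add, mul_card_monicIrreducible_eq_sum_moebius hk',
    mul_card_monicIrreducible_eq_sum_moebius hk', ← Finset.sum_add_distrib]
  simp [mul_add]
end

section
/- For nonzero f, g in (ZMod 10)[X] with f * g ≠ 0, the degree of f * g is at least the minimum of the degrees of f and g. -/
open Polynomial

private lemma zmod10_zero_iff (a : ZMod 10) :
    a = 0 ↔ (ZMod.castHom (by norm_num : (2:ℕ) ∣ 10) (ZMod 2) a = 0 ∧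
      ZMod.castHom (by norm_num : (5:ℕ) ∣ 10) (ZMod 5) a = 0) := by
  revert a; decide

private lemma poly_zero_of_maps (p : Polynomial (ZMod 10))
    (h2 : p.map (ZMod.castHom (by norm_num : (2:ℕ) ∣ 10) (ZMod 2)) = 0)
    (h5 : p.map (ZMod.castHom (by norm_num : (5:ℕ) ∣ 10) (ZMod 5)) = 0) : p = 0 := by
  ext n
  rw [Polynomial.coeff_zero, zmod10_zero_iff]
  constructor
  · have := congrArg (fun q => Polynomial.coeff q n) h2
    simpa using this
  · have := congrArg (fun q => Polynomial.coeff q n) h5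
    simpa using this

private lemma deg_le_max (p : Polynomial (ZMod 10)) :
    p.degree ≤ max (p.map (ZMod.castHom (by norm_num : (2:ℕ) ∣ 10) (ZMod 2))).degree
      (p.map (ZMod.castHom (by norm_num : (5:ℕ) ∣ 10) (ZMod 5))).degree := by
  rw [Polynomial.degree_le_iff_coeff_zero]
  intro m hm
  rw [zmod10_zero_iff]
  constructor
  · have : (p.map (ZMod.castHom (by norm_num : (2:ℕ) ∣ 10) (ZMod 2))).degree < m :=
      lt_of_le_of_lt (le_max_left _ _) hm
    simpa using Polynomial.coeff_eq_zero_of_degree_lt this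
  · have : (p.map (ZMod.castHom (by norm_num : (5:ℕ) ∣ 10) (ZMod 5))).degree < m :=
      lt_of_le_of_lt (le_max_right _ _) hm
    simpa using Polynomial.coeff_eq_zero_of_degree_lt this

theorem degree_mul_ge_min (f g : Polynomial (ZMod 10))
    (hf : f ≠ 0) (hg : g ≠ 0) (hfg : f * g ≠ 0) :
    min f.degree g.degree ≤ (f * g).degree := by
  haveI : Fact (Nat.Prime 2) := ⟨by norm_num⟩
  haveI : Fact (Nat.Prime 5) := ⟨by norm_num⟩
  set φ2 := ZMod.castHom (by norm_num : (2:ℕ) ∣ 10) (ZMod 2) with hφ2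
  set φ5 := ZMod.castHom (by norm_num : (5:ℕ) ∣ 10) (ZMod 5) with hφ5
  set f2 := f.map φ2
  set f5 := f.map φ5
  set g2 := g.map φ2
  set g5 := g.map φ5
  have hmul2 : (f * g).map φ2 = f2 * g2 := Polynomial.map_mul φ2
  have hmul5 : (f * g).map φ5 = f5 * g5 := Polynomial.map_mul φ5
  have hub : max (f2 * g2).degree (f5 * g5).degree ≤ (f * g).degree := by
    apply max_le
    · rw [← hmul2]; exact Polynomial.degree_map_le
    · rw [← hmul5]; exact Polynomial.degree_map_le
  refine le_trans ?_ hub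
  have hd2 : (f2 * g2).degree = f2.degree + g2.degree := Polynomial.degree_mul
  have hd5 : (f5 * g5).degree = f5.degree + g5.degree := Polynomial.degree_mul
  have hfmax := deg_le_max f
  have hgmax := deg_le_max g
  have hnotboth : ¬ (f2 * g2 = 0 ∧ f5 * g5 = 0) := by
    rintro ⟨h2, h5⟩
    exact hfg (poly_zero_of_maps _ (hmul2.trans h2) (hmul5.trans h5))
  -- helper: a ≤ a + b when 0 ≤ b, in WithBot ℕ
  have add_ge_left : ∀ (a : Polynomial (ZMod 2)) (b : Polynomial (ZMod 2)), b ≠ 0 →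
      a.degree ≤ a.degree + b.degree := fun a b hb =>
    le_add_of_nonneg_right (Polynomial.zero_le_degree_iff.mpr hb)
  have add_ge_right : ∀ (a : Polynomial (ZMod 2)) (b : Polynomial (ZMod 2)), a ≠ 0 →
      b.degree ≤ a.degree + b.degree := fun a b ha =>
    le_add_of_nonneg_left (Polynomial.zero_le_degree_iff.mpr ha)
  have add_ge_left5 : ∀ (a : Polynomial (ZMod 5)) (b : Polynomial (ZMod 5)), b ≠ 0 →
      a.degree ≤ a.degree + b.degree := fun a b hb =>
    le_add_of_nonneg_right (Polynomial.zero_le_degree_iff.mpr hb)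
  have add_ge_right5 : ∀ (a : Polynomial (ZMod 5)) (b : Polynomial (ZMod 5)), a ≠ 0 →
      b.degree ≤ a.degree + b.degree := fun a b ha =>
    le_add_of_nonneg_left (Polynomial.zero_le_degree_iff.mpr ha)
  by_cases hg2 : g2 = 0
  · -- then g5 ≠ 0 (else g = 0); and f2*g2 = 0
    have hg5 : g5 ≠ 0 := fun h => hg (poly_zero_of_maps _ hg2 h)
    -- need f5 ≠ 0, i.e. f5*g5 ≠ 0
    have hf5 : f5 ≠ 0 := by
      intro h
      exact hnotboth ⟨by rw [hg2, mul_zero], by rw [h, zero_mul]⟩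
    calc min f.degree g.degree ≤ g.degree := min_le_right _ _
      _ ≤ max g2.degree g5.degree := hgmax
      _ = g5.degree := by rw [hg2, Polynomial.degree_zero]; exact max_eq_right bot_le
      _ ≤ f5.degree + g5.degree := add_ge_right5 _ _ hf5
      _ = (f5 * g5).degree := hd5.symm
      _ ≤ max (f2 * g2).degree (f5 * g5).degree := le_max_right _ _
  · by_cases hg5 : g5 = 0
    · have hf2 : f2 ≠ 0 := by
        intro h
        exact hnotboth ⟨by rw [h, zero_mul], by rw [hg5, mul_zero]⟩
      calc min f.degree g.degree ≤ g.degree := min_le_right _ _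
        _ ≤ max g2.degree g5.degree := hgmax
        _ = g2.degree := by rw [hg5, Polynomial.degree_zero]; exact max_eq_left bot_le
        _ ≤ f2.degree + g2.degree := add_ge_right _ _ hf2
        _ = (f2 * g2).degree := hd2.symm
        _ ≤ max (f2 * g2).degree (f5 * g5).degree := le_max_left _ _
    · -- g2 ≠ 0 and g5 ≠ 0
      calc min f.degree g.degree ≤ f.degree := min_le_left _ _
        _ ≤ max f2.degree f5.degree := hfmax
        _ ≤ max (f2.degree + g2.degree) (f5.degree + g5.degree) :=
            max_le_max (add_ge_left _ _ hg2) (add_ge_left5 _ _ hg5)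
        _ = max (f2 * g2).degree (f5 * g5).degree := by rw [hd2, hd5]
end
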